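/- arXiv:2411.00384 — 5 statements merged into one kernel-verified Lean document; each statement's English description precedes it below -/
import Mathlib

section
/- Let M' be a perfect matching in the one-to-one instance G'_{M'} with weight function wt_{M'}. If there exists an alternating cycle C with respect to M' in G'_{M'} containing two parallel copies (a_i, b_j) and (a_k, b_l) of the same original edge (a,b) ∉ M, then replacing these two edges by (a_i, b_l) and (a_k, b_j) splits C into two shorter alternating cycles C₁ and C₂ with wt_{M'}(C) = wt_{M'}(C₁) + wt_{M'}(C₂). In particular, wt_{M'}(a_i,b_j) + wt_{M'}(a_k,b_l) = wt_{M'}(a_i,b_l) + wt_{M'}(a_k,b_j). -/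
/-- Vote of a vertex comparing a neighbor of rank `x` with a neighbor of rank `y`
(lower rank = more preferred). -/
def vsgn (x y : ℕ) : ℤ := if x < y then 1 else if y < x then -1 else 0

/-- Vote in the cloned instance: clone preferences are lexicographic, first by the
rank of the underlying vertex, then by the clone index (lower index preferred). -/
def lsgn (r j r' j' : ℕ) : ℤ :=
  if r < r' ∨ (r = r' ∧ j < j') then 1
  else if r' < r ∨ (r' = r ∧ j' < j) then -1 else 0

/-- The clones of the vertices of `A`: vertex `a` is replaced by `cap a` clones. -/
abbrev Clones {A : Type*} (cap : A → ℕ) : Type _ := (a : A) × Fin (cap a)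

/-- `M(a)`, the set of jobs matched to agent `a`. -/
def jobsOf {A B : Type*} [DecidableEq A] [DecidableEq B]
    (M : Finset (A × B)) (a : A) : Finset B :=
  (M.filter (fun e => e.1 = a)).image Prod.snd

/-- `M(b)`, the set of agents matched to job `b`. -/
def agentsOf {A B : Type*} [DecidableEq A] [DecidableEq B]
    (M : Finset (A × B)) (b : B) : Finset A :=
  (M.filter (fun e => e.2 = b)).image Prod.fst

/-- The set of possible values `∑_{u ∈ S} vote(u, σ u)` over bijections `σ : S ≃ T`;
the vote `vote_v(S,T)` of the paper is the least element of this set. -/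
def voteSet {B : Type*} (r : B → ℕ) (S T : Finset B) : Set ℤ :=
  {z | ∃ σ : {x // x ∈ S} ≃ {x // x ∈ T},
    z = ∑ x : {x // x ∈ S}, vsgn (r x.1) (r ((σ x).1))}

/-- A perfect matching in the many-to-many instance: `M ⊆ E` and every vertex `v`
is matched to exactly `cap v` partners. -/
def IsPerfect {A B : Type*} [DecidableEq A] [DecidableEq B]
    (E M : Finset (A × B)) (capA : A → ℕ) (capB : B → ℕ) : Prop :=
  M ⊆ E ∧ (∀ a, (M.filter (fun e => e.1 = a)).card = capA a) ∧
    ∀ b, (M.filter (fun e => e.2 = b)).card = capB b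

/-- `M` is a popular perfect matching: `M` is perfect and `Δ(M,N) ≥ 0` for every
perfect matching `N`, where each vertex votes using the most adversarial bijection
between `M(v) \ N(v)` and `N(v) \ M(v)`.  Since the minima at distinct vertices are
independent, `Δ(M,N) ≥ 0` is equivalent to: every choice of one vote value per
vertex sums to a nonnegative number. -/
def PopularPerfect {A B : Type*} [Fintype A] [Fintype B] [DecidableEq A] [DecidableEq B]
    (E : Finset (A × B)) (capA : A → ℕ) (capB : B → ℕ)
    (rA : A → B → ℕ) (rB : B → A → ℕ) (M : Finset (A × B)) : Prop :=
  IsPerfect E M capA capB ∧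
    ∀ N : Finset (A × B), IsPerfect E N capA capB →
      ∀ za : A → ℤ, ∀ zb : B → ℤ,
        (∀ a, za a ∈ voteSet (rA a) (jobsOf M a \ jobsOf N a) (jobsOf N a \ jobsOf M a)) →
        (∀ b, zb b ∈ voteSet (rB b) (agentsOf M b \ agentsOf N b) (agentsOf N b \ agentsOf M b)) →
        0 ≤ (∑ a, za a) + ∑ b, zb b

/-- `M'` is a one-to-one realization of the many-to-many matching `M` in the cloned
instance: every `M'`-edge projects to an `M`-edge, and distinct clones of the same
agent are matched to clones of distinct jobs (so each `M`-edge is used once). -/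
def Realizes {A B : Type*} {capA : A → ℕ} {capB : B → ℕ}
    (M' : Clones capA ≃ Clones capB) (M : Finset (A × B)) : Prop :=
  (∀ x, (x.1, (M' x).1) ∈ M) ∧
    ∀ x y : Clones capA, x ≠ y → x.1 = y.1 → (M' x).1 ≠ (M' y).1

/-- The edge set `E'_{M'}` of the instance `G'_{M'}`: the edges of `M'` together
with all clone-copies of edges of `E \ M`. -/
def inEM {A B : Type*} [DecidableEq A] [DecidableEq B] {capA : A → ℕ} {capB : B → ℕ}
    (E M : Finset (A × B)) (M' : Clones capA ≃ Clones capB)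
    (x : Clones capA) (y : Clones capB) : Prop :=
  M' x = y ∨ ((x.1, y.1) ∈ E ∧ (x.1, y.1) ∉ M)

/-- `wt_{M'}(x,y) = vote_x(y, M'(x)) + vote_y(x, M'(y))` in the cloned instance. -/
def wtEdge {A B : Type*} {capA : A → ℕ} {capB : B → ℕ}
    (rA : A → B → ℕ) (rB : B → A → ℕ) (M' : Clones capA ≃ Clones capB)
    (x : Clones capA) (y : Clones capB) : ℤ :=
  lsgn (rA x.1 y.1) y.2 (rA x.1 (M' x).1) (M' x).2 +
    lsgn (rB y.1 x.1) x.2 (rB y.1 (M'.symm y).1) (M'.symm y).2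

/-- An alternating cycle with respect to the (perfect one-to-one) matching `M'`,
with non-matching edges taken from the edge relation `Edge`: the cycle visits the
distinct clones `f 0, g 0, f 1, g 1, …` cyclically, `(f t, g t)` being `M'`-edges
and `(f (t+1), g t)` being non-matching edges of the instance. -/
structure AltCycle {A B : Type*} {capA : A → ℕ} {capB : B → ℕ}
    (M' : Clones capA ≃ Clones capB)
    (Edge : Clones capA → Clones capB → Prop) where
  m : ℕ
  f : Fin (m + 2) → Clones capA
  g : Fin (m + 2) → Clones capB
  hf : Function.Injective f
  hg : Function.Injective g
  hmatch : ∀ t, M' (f t) = g t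
  hnonmatch : ∀ t, M' (f (t + 1)) ≠ g t
  hedge : ∀ t, Edge (f (t + 1)) (g t)

/-- The weight `wt_{M'}(C)` of an alternating cycle: the sum of the weights of all
its edges. -/
def AltCycle.wt {A B : Type*} {capA : A → ℕ} {capB : B → ℕ}
    {M' : Clones capA ≃ Clones capB} {Edge : Clones capA → Clones capB → Prop}
    (C : AltCycle M' Edge) (rA : A → B → ℕ) (rB : B → A → ℕ) : ℤ :=
  ∑ t : Fin (C.m + 2),
    (wtEdge rA rB M' (C.f t) (C.g t) + wtEdge rA rB M' (C.f (t + 1)) (C.g t))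

/-- A cycle is valid if no two of its non-matching edges are clone-copies of the
same edge of `G` (matching edges are automatically distinct copies). -/
def AltCycle.Valid {A B : Type*} {capA : A → ℕ} {capB : B → ℕ}
    {M' : Clones capA ≃ Clones capB} {Edge : Clones capA → Clones capB → Prop}
    (C : AltCycle M' Edge) : Prop :=
  Function.Injective (fun t : Fin (C.m + 2) => ((C.f (t + 1)).1, (C.g t).1))

/-!
If the clone `a_i` is matched to a clone of a vertex other than `b`, then, `a`'s ranks being
injective, its vote between `b_j` and its partner compares distinct vertices and ignores clone
indices. So on the clones of `(a, b)` the weight separates as `wt(a_i, b_j) = P i + Q j`, which gives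
the exchange identity; the cycle identity is the same exchange inside a sum over the edges of `C`.
-/

lemma lsgn_eq_vsgn_of_ne {r r' : ℕ} (h : r ≠ r') (j j' : ℕ) : lsgn r j r' j' = vsgn r r' := by
  rcases h.lt_or_gt with h' | h' <;> simp [lsgn, vsgn, h', h'.ne, h'.ne', h'.not_gt]

section Weight

variable {A B : Type*} {capA : A → ℕ} {capB : B → ℕ}
  (rA : A → B → ℕ) (rB : B → A → ℕ) (M' : Clones capA ≃ Clones capB)

lemma wtEdge_eq_vsgn_add_vsgn {a : A} {b : B} {i : Fin (capA a)} {j : Fin (capB b)}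
    (hi : rA a b ≠ rA a (M' ⟨a, i⟩).1) (hj : rB b a ≠ rB b (M'.symm ⟨b, j⟩).1) :
    wtEdge rA rB M' ⟨a, i⟩ ⟨b, j⟩
      = vsgn (rA a b) (rA a (M' ⟨a, i⟩).1) + vsgn (rB b a) (rB b (M'.symm ⟨b, j⟩).1) := by
  rw [wtEdge, lsgn_eq_vsgn_of_ne hi, lsgn_eq_vsgn_of_ne hj]

lemma wtEdge_add_wtEdge_eq_swap {a : A} {b : B}
    (hrA : Function.Injective (rA a)) (hrB : Function.Injective (rB b))
    {i k : Fin (capA a)} {j l : Fin (capB b)}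
    (hi : (M' ⟨a, i⟩).1 ≠ b) (hk : (M' ⟨a, k⟩).1 ≠ b)
    (hj : (M'.symm ⟨b, j⟩).1 ≠ a) (hl : (M'.symm ⟨b, l⟩).1 ≠ a) :
    wtEdge rA rB M' ⟨a, i⟩ ⟨b, j⟩ + wtEdge rA rB M' ⟨a, k⟩ ⟨b, l⟩
      = wtEdge rA rB M' ⟨a, i⟩ ⟨b, l⟩ + wtEdge rA rB M' ⟨a, k⟩ ⟨b, j⟩ := by
  rw [wtEdge_eq_vsgn_add_vsgn rA rB M' (hrA.ne hi.symm) (hrB.ne hj.symm),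
    wtEdge_eq_vsgn_add_vsgn rA rB M' (hrA.ne hk.symm) (hrB.ne hl.symm),
    wtEdge_eq_vsgn_add_vsgn rA rB M' (hrA.ne hi.symm) (hrB.ne hl.symm),
    wtEdge_eq_vsgn_add_vsgn rA rB M' (hrA.ne hk.symm) (hrB.ne hj.symm)]
  ring

end Weight

lemma Finset.sum_insert_insert_erase_erase_swap {α β M : Type*} [DecidableEq α] [DecidableEq β]
    [AddCommMonoid M] (w : α × β → M) {C : Finset (α × β)} {x y : α × β}
    (hx : x ∈ C) (hy : y ∈ C) (hxy : (x.1, y.2) ∉ C) (hyx : (y.1, x.2) ∉ C)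
    (hw : w x + w y = w (x.1, y.2) + w (y.1, x.2)) :
    ∑ e ∈ insert (x.1, y.2) (insert (y.1, x.2) ((C.erase x).erase y)), w e = ∑ e ∈ C, w e := by
  have hyx_ne : y ≠ x := by
    rintro rfl
    exact hxy hx
  have hswap_ne : (x.1, y.2) ≠ (y.1, x.2) := by
    intro h
    rw [Prod.mk.injEq] at h
    exact hxy (by rw [h.2]; exact hx)
  rw [Finset.sum_insert (by simp [hswap_ne, hxy]), Finset.sum_insert (by simp [hyx]),
    ← Finset.add_sum_erase C w hx, ← Finset.add_sum_erase _ w (Finset.mem_erase.mpr ⟨hyx_ne, hy⟩),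
    ← add_assoc, ← add_assoc, hw]

theorem stmt5_general {A B : Type*} [DecidableEq A] [DecidableEq B]
    {capA : A → ℕ} {capB : B → ℕ}
    (rA : A → B → ℕ) (rB : B → A → ℕ)
    (hrA : ∀ a, Function.Injective (rA a)) (hrB : ∀ b, Function.Injective (rB b))
    (M' : Clones capA ≃ Clones capB)
    (a : A) (b : B) (i k : Fin (capA a)) (j l : Fin (capB b))
    (hi : (M' ⟨a, i⟩).1 ≠ b) (hk : (M' ⟨a, k⟩).1 ≠ b)
    (hj : (M'.symm ⟨b, j⟩).1 ≠ a) (hl : (M'.symm ⟨b, l⟩).1 ≠ a) :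
    (wtEdge rA rB M' ⟨a, i⟩ ⟨b, j⟩ + wtEdge rA rB M' ⟨a, k⟩ ⟨b, l⟩
      = wtEdge rA rB M' ⟨a, i⟩ ⟨b, l⟩ + wtEdge rA rB M' ⟨a, k⟩ ⟨b, j⟩) ∧
    ∀ C C₁ C₂ : Finset (Clones capA × Clones capB),
      ((⟨a, i⟩ : Clones capA), (⟨b, j⟩ : Clones capB)) ∈ C →
      ((⟨a, k⟩ : Clones capA), (⟨b, l⟩ : Clones capB)) ∈ C →
      ((⟨a, i⟩ : Clones capA), (⟨b, l⟩ : Clones capB)) ∉ C →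
      ((⟨a, k⟩ : Clones capA), (⟨b, j⟩ : Clones capB)) ∉ C →
      Disjoint C₁ C₂ →
      C₁ ∪ C₂ = insert (⟨a, i⟩, ⟨b, l⟩) (insert (⟨a, k⟩, ⟨b, j⟩)
        ((C.erase (⟨a, i⟩, ⟨b, j⟩)).erase (⟨a, k⟩, ⟨b, l⟩))) →
      (∑ e ∈ C, wtEdge rA rB M' e.1 e.2)
        = (∑ e ∈ C₁, wtEdge rA rB M' e.1 e.2) + ∑ e ∈ C₂, wtEdge rA rB M' e.1 e.2 := by
  have hswap := wtEdge_add_wtEdge_eq_swap rA rB M' (hrA a) (hrB b) hi hk hj hl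
  refine ⟨hswap, fun C C₁ C₂ hij hkl hil hkj hdisj hunion => ?_⟩
  rw [← Finset.sum_union hdisj, hunion,
    Finset.sum_insert_insert_erase_erase_swap (fun e => wtEdge rA rB M' e.1 e.2)
      hij hkl hil hkj hswap]

/-- chord swap: if an alternating cycle `C` w.r.t. `M'` in `G'_{M'}`
contains two parallel clone-copies `(a_i,b_j)` and `(a_k,b_l)` of the same original
edge `(a,b) ∉ M` (so the `M'`-partners of these four clones are clones of other
vertices), then `wt_{M'}(a_i,b_j) + wt_{M'}(a_k,b_l) = wt_{M'}(a_i,b_l) + wt_{M'}(a_k,b_j)`;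
consequently replacing the two edges by the chords `(a_i,b_l)`, `(a_k,b_j)` splits `C`
into two shorter cycles `C₁, C₂` with `wt_{M'}(C) = wt_{M'}(C₁) + wt_{M'}(C₂)`. -/
theorem stmt5 {A B : Type*} [DecidableEq A] [DecidableEq B]
    {capA : A → ℕ} {capB : B → ℕ}
    (rA : A → B → ℕ) (rB : B → A → ℕ)
    (hrA : ∀ a, Function.Injective (rA a)) (hrB : ∀ b, Function.Injective (rB b))
    (M' : Clones capA ≃ Clones capB)
    (a : A) (b : B) (i k : Fin (capA a)) (j l : Fin (capB b))
    (hik : i ≠ k) (hjl : j ≠ l)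
    (hi : (M' ⟨a, i⟩).1 ≠ b) (hk : (M' ⟨a, k⟩).1 ≠ b)
    (hj : (M'.symm ⟨b, j⟩).1 ≠ a) (hl : (M'.symm ⟨b, l⟩).1 ≠ a) :
    (wtEdge rA rB M' ⟨a, i⟩ ⟨b, j⟩ + wtEdge rA rB M' ⟨a, k⟩ ⟨b, l⟩
      = wtEdge rA rB M' ⟨a, i⟩ ⟨b, l⟩ + wtEdge rA rB M' ⟨a, k⟩ ⟨b, j⟩) ∧
    ∀ C C₁ C₂ : Finset (Clones capA × Clones capB),
      ((⟨a, i⟩ : Clones capA), (⟨b, j⟩ : Clones capB)) ∈ C →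
      ((⟨a, k⟩ : Clones capA), (⟨b, l⟩ : Clones capB)) ∈ C →
      ((⟨a, i⟩ : Clones capA), (⟨b, l⟩ : Clones capB)) ∉ C →
      ((⟨a, k⟩ : Clones capA), (⟨b, j⟩ : Clones capB)) ∉ C →
      Disjoint C₁ C₂ →
      C₁ ∪ C₂ = insert (⟨a, i⟩, ⟨b, l⟩) (insert (⟨a, k⟩, ⟨b, j⟩)
        ((C.erase (⟨a, i⟩, ⟨b, j⟩)).erase (⟨a, k⟩, ⟨b, l⟩))) →
      (∑ e ∈ C, wtEdge rA rB M' e.1 e.2)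
        = (∑ e ∈ C₁, wtEdge rA rB M' e.1 e.2) + ∑ e ∈ C₂, wtEdge rA rB M' e.1 e.2 :=
  stmt5_general rA rB hrA hrB M' a b i k j l hi hk hj hl
end

section
/- If there exists an alternating cycle C with respect to M' in G'_{M'} with wt_{M'}(C) > 0, then there exists a valid alternating cycle C' with respect to M' in G'_{M'} with wt_{M'}(C') > 0, where an alternating cycle is valid if no two of its edges are copies of the same edge of G. -/
/-!
Take a positive alternating cycle with as few edges as possible. Matching edges have weight
zero, and off `M` the weight of a clone edge `(x, y)` is a vote of `x` that sees `y` only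
through `y.1` plus a vote of `y` that sees `x` only through `x.1`. Hence if two non-matching
edges `(x, y)` and `(x', y')` are copies of the same edge of `G`, replacing them by the chords
`(x, y')` and `(x', y)` keeps the total weight and splits the cycle into two shorter
alternating cycles, one of which must have positive weight.
-/

open Finset Fin.NatCast

lemma Fin.natCast_val_injective_of_le {k n : ℕ} [NeZero n] (h : k ≤ n) :
    Function.Injective fun i : Fin k => (i.val : Fin n) := fun i j hij => by
  simpa [Fin.ext_iff, Nat.mod_eq_of_lt (i.isLt.trans_le h),
    Nat.mod_eq_of_lt (j.isLt.trans_le h)] using hij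

lemma lsgn_of_ne {r r' : ℕ} (j j' : ℕ) (h : r ≠ r') : lsgn r j r' j' = vsgn r r' := by
  unfold lsgn vsgn
  split_ifs <;> omega

lemma lsgn_self (r j : ℕ) : lsgn r j r j = 0 := by
  simp [lsgn]

section Weight

variable {A B : Type*} {capA : A → ℕ} {capB : B → ℕ}
  {rA : A → B → ℕ} {rB : B → A → ℕ} {M' : Clones capA ≃ Clones capB} {M : Finset (A × B)}

lemma wtEdge_apply_self (x : Clones capA) : wtEdge rA rB M' x (M' x) = 0 := by
  rw [wtEdge, M'.symm_apply_apply, lsgn_self, lsgn_self, add_zero]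

lemma wtEdge_of_notMem (hreal : Realizes M' M)
    (hrA : ∀ a, Function.Injective (rA a)) (hrB : ∀ b, Function.Injective (rB b))
    {x : Clones capA} {y : Clones capB} (h : (x.1, y.1) ∉ M) :
    wtEdge rA rB M' x y =
      vsgn (rA x.1 y.1) (rA x.1 (M' x).1) + vsgn (rB y.1 x.1) (rB y.1 (M'.symm y).1) := by
  have hx : rA x.1 y.1 ≠ rA x.1 (M' x).1 := fun he => h (hrA x.1 he ▸ hreal.1 x)
  have hy : rB y.1 x.1 ≠ rB y.1 (M'.symm y).1 := fun he =>
    h (hrB y.1 he ▸ by simpa using hreal.1 (M'.symm y))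
  rw [wtEdge, lsgn_of_ne _ _ hx, lsgn_of_ne _ _ hy]

lemma wtEdge_add_wtEdge_swap (hreal : Realizes M' M)
    (hrA : ∀ a, Function.Injective (rA a)) (hrB : ∀ b, Function.Injective (rB b))
    {x x' : Clones capA} {y y' : Clones capB} (hx : x.1 = x'.1) (hy : y.1 = y'.1)
    (h : (x.1, y.1) ∉ M) :
    wtEdge rA rB M' x y + wtEdge rA rB M' x' y' =
      wtEdge rA rB M' x y' + wtEdge rA rB M' x' y := by
  rw [wtEdge_of_notMem hreal hrA hrB h, wtEdge_of_notMem hreal hrA hrB (hx ▸ hy ▸ h),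
    wtEdge_of_notMem hreal hrA hrB (hy ▸ h), wtEdge_of_notMem hreal hrA hrB (hx ▸ h)]
  rw [hx, hy]
  ring

end Weight

lemma inEM_of_mem_sdiff {A B : Type*} [DecidableEq A] [DecidableEq B]
    {capA : A → ℕ} {capB : B → ℕ} {E M : Finset (A × B)} {M' : Clones capA ≃ Clones capB}
    {x : Clones capA} {y : Clones capB} (h : (x.1, y.1) ∈ E \ M) : inEM E M M' x y :=
  Or.inr (mem_sdiff.1 h)

namespace AltCycle

variable {A B : Type*} {capA : A → ℕ} {capB : B → ℕ} {M' : Clones capA ≃ Clones capB}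
  {Edge : Clones capA → Clones capB → Prop} (C : AltCycle M' Edge) (rA : A → B → ℕ)
  (rB : B → A → ℕ)

/-- Indices are read modulo the length of the cycle. -/
def edgeWt (i : ℕ) : ℤ := wtEdge rA rB M' (C.f (i + 1)) (C.g i)

lemma wt_eq_sum : C.wt rA rB = ∑ t, wtEdge rA rB M' (C.f (t + 1)) (C.g t) := by
  simp only [wt, ← C.hmatch, wtEdge_apply_self, zero_add]

lemma wt_eq_sum_range : C.wt rA rB = ∑ i ∈ range (C.m + 2), C.edgeWt rA rB i := by
  rw [wt_eq_sum, ← Fin.sum_univ_eq_sum_range]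
  simp [edgeWt]

def rotate (k : ℕ) : AltCycle M' Edge where
  m := C.m
  f t := C.f (t + k)
  g t := C.g (t + k)
  hf := C.hf.comp (add_left_injective _)
  hg := C.hg.comp (add_left_injective _)
  hmatch _ := C.hmatch _
  hnonmatch t := add_right_comm t 1 (k : Fin _) ▸ C.hnonmatch _
  hedge t := add_right_comm t 1 (k : Fin _) ▸ C.hedge _

lemma wt_rotate (k : ℕ) : (C.rotate k).wt rA rB = C.wt rA rB := by
  rw [wt_eq_sum, wt_eq_sum, ← Equiv.sum_comp (Equiv.addRight (k : Fin (C.m + 2)))]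
  refine sum_congr rfl fun t _ => ?_
  exact congrArg (fun u => wtEdge rA rB M' (C.f u) _) (add_right_comm _ _ _)

lemma edgeWt_rotate (k i : ℕ) : (C.rotate k).edgeWt rA rB i = C.edgeWt rA rB (i + k) := by
  simp only [edgeWt, rotate, Nat.cast_add]
  exact congrArg (fun u => wtEdge rA rB M' (C.f u) _) (add_right_comm _ _ _)

/-- The cycle `f 0, g 0, …, f (d + 1), g (d + 1)` closed up by the edge `(f 0, g (d + 1))`. -/
def shortcut (d : ℕ) (hd : d ≤ C.m) (hclose : Edge (C.f 0) (C.g (d + 1 : ℕ))) :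
    AltCycle M' Edge where
  m := d
  f i := C.f i.val
  g i := C.g i.val
  hf := C.hf.comp (Fin.natCast_val_injective_of_le (by omega))
  hg := C.hg.comp (Fin.natCast_val_injective_of_le (by omega))
  hmatch _ := C.hmatch _
  hnonmatch i := by
    induction i using Fin.lastCases with
    | last =>
      have h0 : ((d + 1 : ℕ) : Fin (C.m + 2)) ≠ 0 := fun h =>
        absurd (Nat.le_of_dvd d.succ_pos (Fin.natCast_eq_zero.1 h)) (by omega)
      simpa [C.hmatch] using C.hg.ne h0.symm
    | cast j => simpa [Fin.coeSucc_eq_succ] using C.hnonmatch j.val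
  hedge i := by
    induction i using Fin.lastCases with
    | last => simpa using hclose
    | cast j => simpa [Fin.coeSucc_eq_succ] using C.hedge j.val

lemma wt_shortcut (d : ℕ) (hd : d ≤ C.m) (hclose : Edge (C.f 0) (C.g (d + 1 : ℕ))) :
    (C.shortcut d hd hclose).wt rA rB =
      ∑ i ∈ range (d + 1), C.edgeWt rA rB i + wtEdge rA rB M' (C.f 0) (C.g (d + 1 : ℕ)) := by
  rw [wt_eq_sum]
  change ∑ t : Fin (d + 2), wtEdge rA rB M' (C.f (t + 1).val) (C.g t.val) = _
  rw [Fin.sum_univ_castSucc, ← Fin.sum_univ_eq_sum_range]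
  simp [edgeWt, Fin.coeSucc_eq_succ]

end AltCycle

section Descent

variable {A B : Type*} [DecidableEq A] [DecidableEq B] {capA : A → ℕ} {capB : B → ℕ}
  {rA : A → B → ℕ} {rB : B → A → ℕ} {E M : Finset (A × B)} {M' : Clones capA ≃ Clones capB}

lemma AltCycle.proj_mem_sdiff (C : AltCycle M' (inEM E M M')) (t : Fin (C.m + 2)) :
    ((C.f (t + 1)).1, (C.g t).1) ∈ E \ M :=
  mem_sdiff.2 ((C.hedge t).resolve_left (C.hnonmatch t))

lemma AltCycle.exists_shorter_of_proj_eq (hreal : Realizes M' M)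
    (hrA : ∀ a, Function.Injective (rA a)) (hrB : ∀ b, Function.Injective (rB b))
    (C : AltCycle M' (inEM E M M')) (hC : 0 < C.wt rA rB) {s : ℕ} (hs : s ≤ C.m)
    (hf : (C.f (s + 1)).1 = (C.f 0).1) (hg : (C.g s).1 = (C.g (C.m + 1 : ℕ)).1) :
    ∃ C' : AltCycle M' (inEM E M M'), C'.m < C.m ∧ 0 < C'.wt rA rB := by
  set w := C.edgeWt rA rB
  have hlast : ((C.m + 1 : ℕ) : Fin (C.m + 2)) + 1 = 0 := by
    rw [Fin.natCast_eq_last, Fin.last_add_one]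
  have hmem := C.proj_mem_sdiff s
  have hswap : w s + w (C.m + 1) = wtEdge rA rB M' (C.f 0) (C.g s)
      + wtEdge rA rB M' (C.f (s + 1)) (C.g (C.m + 1 : ℕ)) := by
    simp only [w, edgeWt, hlast]
    rw [wtEdge_add_wtEdge_swap hreal hrA hrB hf hg (mem_sdiff.1 hmem).2, add_comm]
  have hsplit : C.wt rA rB = (∑ i ∈ range s, w i + w s)
      + (∑ j ∈ range (C.m - s), w (s + 1 + j) + w (C.m + 1)) := by
    rw [wt_eq_sum_range, show C.m + 2 = (s + 1) + (C.m - s + 1) by omega, sum_range_add,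
      sum_range_succ, sum_range_succ, show s + 1 + (C.m - s) = C.m + 1 by omega]
  -- the two halves `f 0, …, g s` and `f (s + 1), …, g (m + 1)`, each closed by a chord
  rcases lt_or_ge 0 (∑ i ∈ range s, w i + wtEdge rA rB M' (C.f 0) (C.g s)) with hpos | hnonpos
  · obtain ⟨d, rfl⟩ : ∃ d, s = d + 1 := Nat.exists_eq_succ_of_ne_zero (by
      rintro rfl
      simp [← C.hmatch, wtEdge_apply_self] at hpos)
    have hclose : inEM E M M' (C.f 0) (C.g (d + 1 : ℕ)) :=
      inEM_of_mem_sdiff (by rwa [← hf])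
    exact ⟨C.shortcut d (by omega) hclose, by show d < C.m; omega, by rwa [wt_shortcut]⟩
  · have hpos : 0 < ∑ j ∈ range (C.m - s), w (s + 1 + j)
        + wtEdge rA rB M' (C.f (s + 1)) (C.g (C.m + 1 : ℕ)) := by linarith
    obtain ⟨d, hd⟩ : ∃ d, C.m - s = d + 1 := Nat.exists_eq_succ_of_ne_zero (by
      intro h
      rw [show s = C.m by omega, Nat.cast_succ, ← C.hmatch, wtEdge_apply_self] at hpos
      simp at hpos)
    let R := C.rotate (s + 1)
    have hR0 : R.f 0 = C.f (s + 1) := congrArg C.f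
      (show (0 : Fin (C.m + 2)) + (s + 1 : ℕ) = s + 1 by rw [zero_add, Nat.cast_succ])
    have hRd : R.g (d + 1 : ℕ) = C.g (C.m + 1 : ℕ) := congrArg C.g
      (show ((d + 1 : ℕ) : Fin (C.m + 2)) + (s + 1 : ℕ) = (C.m + 1 : ℕ) by
        rw [← Nat.cast_add, show d + 1 + (s + 1) = C.m + 1 by omega])
    have hclose : inEM E M M' (R.f 0) (R.g (d + 1 : ℕ)) := by
      refine inEM_of_mem_sdiff ?_
      rw [hR0, hRd, hf, ← hlast]
      exact C.proj_mem_sdiff _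
    refine ⟨R.shortcut d (by show d ≤ C.m; omega) hclose, by show d < C.m; omega, ?_⟩
    rw [wt_shortcut, hR0, hRd]
    simpa only [R, edgeWt_rotate, add_comm _ (s + 1), hd] using hpos

lemma AltCycle.exists_shorter_of_not_valid (hreal : Realizes M' M)
    (hrA : ∀ a, Function.Injective (rA a)) (hrB : ∀ b, Function.Injective (rB b))
    (C : AltCycle M' (inEM E M M')) (hC : 0 < C.wt rA rB) (hv : ¬ C.Valid) :
    ∃ C' : AltCycle M' (inEM E M M'), C'.m < C.m ∧ 0 < C'.wt rA rB := by
  obtain ⟨t, t', hp, hne⟩ := Function.not_injective_iff.1 hv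
  obtain ⟨hpf, hpg⟩ := Prod.mk.inj hp
  have hk : ((t'.val + 1 : ℕ) : Fin (C.m + 2)) = t' + 1 := by
    rw [Nat.cast_succ, Fin.cast_val_eq_self]
  have hlast : ((C.m + 1 : ℕ) : Fin (C.m + 2)) + (t' + 1) = t' := by
    rw [add_left_comm, Fin.natCast_eq_last, Fin.last_add_one, add_zero]
  let R := C.rotate (t'.val + 1)
  let s := (t - (t' + 1)).val
  have hs : s ≤ C.m := by
    have hlt : s < C.m + 2 := (t - (t' + 1)).isLt
    by_contra! h
    apply hne
    rw [← sub_add_cancel t (t' + 1), ← Fin.cast_val_eq_self (t - (t' + 1)),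
      show (t - (t' + 1)).val = C.m + 1 by omega, hlast]
  have hf : (R.f (s + 1)).1 = (R.f 0).1 := by
    change (C.f ((s : Fin (C.m + 2)) + 1 + (t'.val + 1 : ℕ))).1 = (C.f (0 + (t'.val + 1 : ℕ))).1
    rwa [hk, Fin.cast_val_eq_self, zero_add, show t - (t' + 1) + 1 + (t' + 1) = t + 1 by abel]
  have hg : (R.g s).1 = (R.g (C.m + 1 : ℕ)).1 := by
    change (C.g ((s : Fin (C.m + 2)) + (t'.val + 1 : ℕ))).1
      = (C.g (((C.m + 1 : ℕ) : Fin (C.m + 2)) + (t'.val + 1 : ℕ))).1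
    rwa [hk, hlast, Fin.cast_val_eq_self, sub_add_cancel]
  exact R.exists_shorter_of_proj_eq hreal hrA hrB (by rwa [AltCycle.wt_rotate]) hs hf hg

end Descent

theorem stmt6_general {A B : Type*} [DecidableEq A] [DecidableEq B]
    {capA : A → ℕ} {capB : B → ℕ}
    (rA : A → B → ℕ) (rB : B → A → ℕ)
    (hrA : ∀ a, Function.Injective (rA a)) (hrB : ∀ b, Function.Injective (rB b))
    (E M : Finset (A × B))
    (M' : Clones capA ≃ Clones capB) (hreal : Realizes M' M)
    (C : AltCycle M' (inEM E M M')) (hC : 0 < C.wt rA rB) :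
    ∃ C' : AltCycle M' (inEM E M M'), C'.Valid ∧ 0 < C'.wt rA rB := by
  induction hm : C.m using Nat.strong_induction_on generalizing C with
  | _ n ih =>
    by_cases hv : C.Valid
    · exact ⟨C, hv, hC⟩
    obtain ⟨C', hlt, hC'⟩ := C.exists_shorter_of_not_valid hreal hrA hrB hC hv
    exact ih _ (hm ▸ hlt) C' hC' rfl

/-- if some alternating cycle `C` w.r.t. the realization `M'` in
`G'_{M'}` has `wt_{M'}(C) > 0`, then some *valid* alternating cycle `C'` (no two of
whose edges are copies of the same edge of `G`) has `wt_{M'}(C') > 0`. -/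
theorem stmt6 {A B : Type*} [Fintype A] [Fintype B] [DecidableEq A] [DecidableEq B]
    {capA : A → ℕ} {capB : B → ℕ}
    (rA : A → B → ℕ) (rB : B → A → ℕ)
    (hrA : ∀ a, Function.Injective (rA a)) (hrB : ∀ b, Function.Injective (rB b))
    (E M : Finset (A × B)) (hM : IsPerfect E M capA capB)
    (M' : Clones capA ≃ Clones capB) (hreal : Realizes M' M)
    (C : AltCycle M' (inEM E M M')) (hC : 0 < C.wt rA rB) :
    ∃ C' : AltCycle M' (inEM E M M'), C'.Valid ∧ 0 < C'.wt rA rB :=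
  stmt6_general rA rB hrA hrB E M M' hreal C hC
end

section
/- Let M* be a stable matching in the colorful many-to-many multigraph G*, and let M⁰ be any one-to-one realization of M* in the colorful cloned instance G⁰_{M'}, where M' is the (colorless) projection of M⁰. Then M⁰ is a stable matching in G⁰_{M'}. -/
/-- A matching in the colorful many-to-many multigraph `G*`: a set of colored edges
`(a, b, c)` with `(a,b) ∈ E` and color `c < n₀`, at most one color per underlying
edge, respecting the capacities. -/
def ColMatching {A B : Type*} [DecidableEq A] [DecidableEq B]
    (E : Finset (A × B)) (capA : A → ℕ) (capB : B → ℕ) (n0 : ℕ)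
    (Ms : Finset (A × B × ℕ)) : Prop :=
  (∀ e ∈ Ms, (e.1, e.2.1) ∈ E ∧ e.2.2 < n0) ∧
    (∀ e ∈ Ms, ∀ f ∈ Ms, e.1 = f.1 → e.2.1 = f.2.1 → e = f) ∧
    (∀ a, (Ms.filter (fun e => e.1 = a)).card ≤ capA a) ∧
    ∀ b, (Ms.filter (fun e => e.2.1 = b)).card ≤ capB b

/-- The colored edge `(x,y)_c` blocks `Ms` in `G*`: `x` is not fully matched or
prefers `(x,y)_c` to its worst `Ms`-edge (agents prefer lower colors, then their
usual ranking), and symmetrically for `y` (jobs prefer higher colors). -/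
def ColBlocks {A B : Type*} [DecidableEq A] [DecidableEq B]
    (capA : A → ℕ) (capB : B → ℕ) (rA : A → B → ℕ) (rB : B → A → ℕ)
    (Ms : Finset (A × B × ℕ)) (x : A) (y : B) (c : ℕ) : Prop :=
  ((Ms.filter (fun e => e.1 = x)).card < capA x ∨
      ∃ f ∈ Ms, f.1 = x ∧ (c < f.2.2 ∨ (c = f.2.2 ∧ rA x y < rA x f.2.1))) ∧
    ((Ms.filter (fun e => e.2.1 = y)).card < capB y ∨
      ∃ f ∈ Ms, f.2.1 = y ∧ (f.2.2 < c ∨ (f.2.2 = c ∧ rB y x < rB y f.1)))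

/-- `Ms` is a stable matching in the colorful many-to-many multigraph `G*`: it is a
matching and no colored copy of an edge of `E` outside the projection of `Ms`
blocks it. -/
def ColStable {A B : Type*} [DecidableEq A] [DecidableEq B]
    (E : Finset (A × B)) (capA : A → ℕ) (capB : B → ℕ)
    (rA : A → B → ℕ) (rB : B → A → ℕ) (n0 : ℕ)
    (Ms : Finset (A × B × ℕ)) : Prop :=
  ColMatching E capA capB n0 Ms ∧
    ∀ x y c, (x, y) ∈ E → (x, y) ∉ Ms.image (fun e => (e.1, e.2.1)) → c < n0 →
      ¬ ColBlocks capA capB rA rB Ms x y c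

/-- `M0` is a one-to-one realization of the colored matching `Ms` on the clones:
colored clone edges projecting bijectively onto `Ms`, with each clone on at most
one edge, and the colors preserved. -/
def ColRealizes {A B : Type*} [DecidableEq A] [DecidableEq B]
    {capA : A → ℕ} {capB : B → ℕ}
    (M0 : Finset (Clones capA × Clones capB × ℕ)) (Ms : Finset (A × B × ℕ)) : Prop :=
  M0.image (fun e => (e.1.1, e.2.1.1, e.2.2)) = Ms ∧
    M0.card = Ms.card ∧
    ∀ e ∈ M0, ∀ f ∈ M0, e ≠ f → e.1 ≠ f.1 ∧ e.2.1 ≠ f.2.1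

/-- Edge set of the colorful one-to-one instance `G⁰_{M'}`: all colors `c < n₀` of
the edges of `E'_{M'}`, i.e. of the edges of `M'` (the colorless projection `Mcl` of
`M0` to clone pairs) together with all clone-copies of edges of `E` outside the
projection `Mproj` of `Ms` to `A × B`. -/
def inE0 {A B : Type*} [DecidableEq A] [DecidableEq B]
    {capA : A → ℕ} {capB : B → ℕ}
    (E : Finset (A × B)) (Mproj : Finset (A × B))
    (Mcl : Finset (Clones capA × Clones capB))
    (x : Clones capA) (y : Clones capB) (c n0 : ℕ) : Prop :=
  c < n0 ∧ ((x, y) ∈ Mcl ∨ ((x.1, y.1) ∈ E ∧ (x.1, y.1) ∉ Mproj))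

/-- The colored clone edge `(x,y)_c` blocks the one-to-one matching `M0` in
`G⁰_{M'}`: each endpoint is unmatched or prefers `(x,y)_c` to its `M0`-edge, where
clones of agents prefer lower colors, then rank, then lower clone index, and clones
of jobs prefer higher colors, then rank, then lower clone index. -/
def Blocks0 {A B : Type*} [DecidableEq A] [DecidableEq B]
    {capA : A → ℕ} {capB : B → ℕ}
    (rA : A → B → ℕ) (rB : B → A → ℕ)
    (M0 : Finset (Clones capA × Clones capB × ℕ))
    (x : Clones capA) (y : Clones capB) (c : ℕ) : Prop :=
  (∀ f ∈ M0, f.1 = x →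
      (c < f.2.2 ∨ (c = f.2.2 ∧ (rA x.1 y.1 < rA x.1 f.2.1.1 ∨
        (rA x.1 y.1 = rA x.1 f.2.1.1 ∧ (y.2 : ℕ) < (f.2.1.2 : ℕ)))))) ∧
    ∀ f ∈ M0, f.2.1 = y →
      (f.2.2 < c ∨ (f.2.2 = c ∧ (rB y.1 x.1 < rB y.1 f.1.1 ∨
        (rB y.1 x.1 = rB y.1 f.1.1 ∧ (x.2 : ℕ) < (f.1.2 : ℕ)))))

/-- `M0` is a stable matching in the colorful one-to-one instance `G⁰_{M'}`:
no edge of `G⁰_{M'}` outside `M0` blocks `M0`. -/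
def Stable0 {A B : Type*} [DecidableEq A] [DecidableEq B]
    {capA : A → ℕ} {capB : B → ℕ}
    (E : Finset (A × B)) (Mproj : Finset (A × B))
    (rA : A → B → ℕ) (rB : B → A → ℕ) (n0 : ℕ)
    (M0 : Finset (Clones capA × Clones capB × ℕ)) : Prop :=
  ∀ (x : Clones capA) (y : Clones capB) (c : ℕ),
    inE0 E Mproj (M0.image (fun e => (e.1, e.2.1))) x y c n0 →
    (x, y, c) ∉ M0 → ¬ Blocks0 rA rB M0 x y c

/-! A blocking clone edge `(x, y)_c` cannot be an edge of `M'`: at its own edge the agent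
clone would need `c` below its color and the job clone `c` above it. Any other edge of
`G⁰_{M'}` projects to `(x.1, y.1)_c`, an edge of `E` outside the projection of `Ms`, and
this colored edge blocks `Ms`. An unmatched clone leaves its vertex with fewer than
`cap` edges of `Ms`, and a clone preferring `(x, y)_c` to its `M0`-edge makes its vertex
prefer `(x.1, y.1)_c` to the corresponding `Ms`-edge: the clone-index tie-break never
applies, since equal ranks force equal partners and `(x.1, y.1)` is not matched. -/

theorem Clones.card_lt_of_forall_fst_eq {A : Type*} {cap : A → ℕ} (T : Finset (Clones cap))
    (x : Clones cap) (hT : ∀ z ∈ T, z.1 = x.1) (hx : x ∉ T) : T.card < cap x.1 := by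
  have eq_of_val_eq : ∀ z ∈ T, ∀ w : Clones cap, w.1 = x.1 → (z.2 : ℕ) = w.2 → z = w :=
    fun z hz w hw h =>
      Sigma.ext ((hT z hz).trans hw.symm) ((Fin.heq_ext_iff (by rw [hT z hz, hw])).2 h)
  have hsub : T.image (fun z => (z.2 : ℕ)) ⊆ (Finset.range (cap x.1)).erase x.2 := by
    rintro _ hn
    obtain ⟨z, hz, rfl⟩ := Finset.mem_image.1 hn
    refine Finset.mem_erase.2 ⟨fun h => hx (eq_of_val_eq z hz x rfl h ▸ hz), ?_⟩
    exact Finset.mem_range.2 (hT z hz ▸ z.2.isLt)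
  calc T.card = (T.image fun z => (z.2 : ℕ)).card :=
        (Finset.card_image_of_injOn fun z hz w hw h => eq_of_val_eq z hz w (hT w hw) h).symm
    _ ≤ ((Finset.range (cap x.1)).erase x.2).card := Finset.card_le_card hsub
    _ < cap x.1 := by
      rw [Finset.card_erase_of_mem (Finset.mem_range.2 x.2.isLt), Finset.card_range]
      exact Nat.sub_lt x.2.pos one_pos

namespace ColRealizes

variable {A B : Type*} [DecidableEq A] [DecidableEq B] {capA : A → ℕ} {capB : B → ℕ}
  {M0 : Finset (Clones capA × Clones capB × ℕ)} {Ms : Finset (A × B × ℕ)}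

theorem injOn_proj (h : ColRealizes M0 Ms) :
    Set.InjOn (fun e : Clones capA × Clones capB × ℕ => (e.1.1, e.2.1.1, e.2.2)) M0 :=
  Finset.card_image_iff.mp (by rw [h.1, h.2.1])

theorem proj_mem (h : ColRealizes M0 Ms) {f : Clones capA × Clones capB × ℕ} (hf : f ∈ M0) :
    (f.1.1, f.2.1.1, f.2.2) ∈ Ms :=
  h.1 ▸ Finset.mem_image_of_mem _ hf

theorem card_filter (h : ColRealizes M0 Ms) (P : A × B × ℕ → Prop) [DecidablePred P] :
    (Ms.filter P).card = (M0.filter fun e => P (e.1.1, e.2.1.1, e.2.2)).card := by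
  rw [← h.1, Finset.filter_image]
  exact Finset.card_image_of_injOn
    (h.injOn_proj.mono (Finset.coe_subset.2 (Finset.filter_subset _ _)))

theorem card_filter_fst_lt (h : ColRealizes M0 Ms) (x : Clones capA) (hx : ∀ f ∈ M0, f.1 ≠ x) :
    (Ms.filter fun e => e.1 = x.1).card < capA x.1 := by
  rw [h.card_filter]
  calc _ = ((M0.filter fun f => f.1.1 = x.1).image Prod.fst).card := by
        refine (Finset.card_image_of_injOn fun e he f hf hef => ?_).symm
        by_contra hne
        exact (h.2.2 e (Finset.mem_filter.1 he).1 f (Finset.mem_filter.1 hf).1 hne).1 hef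
    _ < capA x.1 := by
      refine Clones.card_lt_of_forall_fst_eq _ x (fun z hz => ?_) fun hz => ?_ <;>
        obtain ⟨f, hf, rfl⟩ := Finset.mem_image.1 hz
      · exact (Finset.mem_filter.1 hf).2
      · exact hx f (Finset.mem_filter.1 hf).1 rfl

theorem card_filter_snd_lt (h : ColRealizes M0 Ms) (y : Clones capB)
    (hy : ∀ f ∈ M0, f.2.1 ≠ y) : (Ms.filter fun e => e.2.1 = y.1).card < capB y.1 := by
  rw [h.card_filter]
  calc _ = ((M0.filter fun f => f.2.1.1 = y.1).image fun f => f.2.1).card := by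
        refine (Finset.card_image_of_injOn fun e he f hf hef => ?_).symm
        by_contra hne
        exact (h.2.2 e (Finset.mem_filter.1 he).1 f (Finset.mem_filter.1 hf).1 hne).2 hef
    _ < capB y.1 := by
      refine Clones.card_lt_of_forall_fst_eq _ y (fun z hz => ?_) fun hz => ?_ <;>
        obtain ⟨f, hf, rfl⟩ := Finset.mem_image.1 hz
      · exact (Finset.mem_filter.1 hf).2
      · exact hy f (Finset.mem_filter.1 hf).1 rfl

variable {rA : A → B → ℕ} {rB : B → A → ℕ} {x : Clones capA} {y : Clones capB} {c : ℕ}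

theorem agent_blocks_of_blocks0 (h : ColRealizes M0 Ms) (hr : Function.Injective (rA x.1))
    (hxy : (x.1, y.1) ∉ Ms.image fun e => (e.1, e.2.1)) (hb : Blocks0 rA rB M0 x y c) :
    (Ms.filter fun e => e.1 = x.1).card < capA x.1 ∨
      ∃ f ∈ Ms, f.1 = x.1 ∧ (c < f.2.2 ∨ (c = f.2.2 ∧ rA x.1 y.1 < rA x.1 f.2.1)) := by
  by_cases hx : ∃ f ∈ M0, f.1 = x
  · obtain ⟨f, hf, rfl⟩ := hx
    refine Or.inr ⟨_, h.proj_mem hf, rfl, ?_⟩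
    rcases hb.1 f hf rfl with hc | ⟨hc, hrank | ⟨hrank, -⟩⟩
    · exact Or.inl hc
    · exact Or.inr ⟨hc, hrank⟩
    · rw [hr hrank] at hxy
      exact absurd (Finset.mem_image_of_mem _ (h.proj_mem hf)) hxy
  · exact Or.inl (h.card_filter_fst_lt x fun f hf hfx => hx ⟨f, hf, hfx⟩)

theorem job_blocks_of_blocks0 (h : ColRealizes M0 Ms) (hr : Function.Injective (rB y.1))
    (hxy : (x.1, y.1) ∉ Ms.image fun e => (e.1, e.2.1)) (hb : Blocks0 rA rB M0 x y c) :
    (Ms.filter fun e => e.2.1 = y.1).card < capB y.1 ∨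
      ∃ f ∈ Ms, f.2.1 = y.1 ∧ (f.2.2 < c ∨ (f.2.2 = c ∧ rB y.1 x.1 < rB y.1 f.1)) := by
  by_cases hy : ∃ f ∈ M0, f.2.1 = y
  · obtain ⟨f, hf, rfl⟩ := hy
    refine Or.inr ⟨_, h.proj_mem hf, rfl, ?_⟩
    rcases hb.2 f hf rfl with hc | ⟨hc, hrank | ⟨hrank, -⟩⟩
    · exact Or.inl hc
    · exact Or.inr ⟨hc, hrank⟩
    · rw [hr hrank] at hxy
      exact absurd (Finset.mem_image_of_mem _ (h.proj_mem hf)) hxy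
  · exact Or.inl (h.card_filter_snd_lt y fun f hf hfy => hy ⟨f, hf, hfy⟩)

theorem colBlocks_of_blocks0 (h : ColRealizes M0 Ms) (hrA : Function.Injective (rA x.1))
    (hrB : Function.Injective (rB y.1)) (hxy : (x.1, y.1) ∉ Ms.image fun e => (e.1, e.2.1))
    (hb : Blocks0 rA rB M0 x y c) : ColBlocks capA capB rA rB Ms x.1 y.1 c :=
  ⟨h.agent_blocks_of_blocks0 hrA hxy hb, h.job_blocks_of_blocks0 hrB hxy hb⟩

end ColRealizes

theorem not_blocks0_of_mem {A B : Type*} [DecidableEq A] [DecidableEq B] {capA : A → ℕ}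
    {capB : B → ℕ} (rA : A → B → ℕ) (rB : B → A → ℕ)
    {M0 : Finset (Clones capA × Clones capB × ℕ)} {f : Clones capA × Clones capB × ℕ}
    (hf : f ∈ M0) (c : ℕ) : ¬ Blocks0 rA rB M0 f.1 f.2.1 c := by
  rintro ⟨hagent, hjob⟩
  rcases hagent f hf rfl with hc | ⟨-, hrank | ⟨-, hidx⟩⟩
  · rcases hjob f hf rfl with hc' | ⟨-, hrank | ⟨-, hidx⟩⟩ <;> omega
  · exact lt_irrefl _ hrank
  · exact lt_irrefl _ hidx

theorem stmt9_general {A B : Type*} [DecidableEq A] [DecidableEq B]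
    (capA : A → ℕ) (capB : B → ℕ)
    (rA : A → B → ℕ) (rB : B → A → ℕ)
    (hrA : ∀ a, Function.Injective (rA a)) (hrB : ∀ b, Function.Injective (rB b))
    (E : Finset (A × B)) (n0 : ℕ)
    (Ms : Finset (A × B × ℕ))
    (hstable : ColStable E capA capB rA rB n0 Ms)
    (M0 : Finset (Clones capA × Clones capB × ℕ))
    (hreal : ColRealizes M0 Ms) :
    Stable0 E (Ms.image (fun e => (e.1, e.2.1))) rA rB n0 M0 := by
  rintro x y c ⟨hc, hxy⟩ - hb
  rcases hxy with hM' | ⟨hE, hxy⟩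
  · obtain ⟨f, hf, hfxy⟩ := Finset.mem_image.1 hM'
    cases hfxy
    exact not_blocks0_of_mem rA rB hf c hb
  · exact hstable.2 x.1 y.1 c hE hxy hc (hreal.colBlocks_of_blocks0 (hrA x.1) (hrB y.1) hxy hb)

/-- Lemma 1: if `Ms` is a stable matching in the colorful
many-to-many multigraph `G*` (with `n₀ = Σ_{a∈A} cap(a)` colors, agents preferring
lower colors and jobs higher colors, strict underlying preferences), then any
one-to-one realization `M0` of `Ms` is a stable matching in the colorful cloned
one-to-one instance `G⁰_{M'}`, where `M'` is the colorless projection of `M0`. -/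
theorem stmt9 {A B : Type*} [Fintype A] [Fintype B] [DecidableEq A] [DecidableEq B]
    (capA : A → ℕ) (capB : B → ℕ)
    (rA : A → B → ℕ) (rB : B → A → ℕ)
    (hrA : ∀ a, Function.Injective (rA a)) (hrB : ∀ b, Function.Injective (rB b))
    (E : Finset (A × B)) (n0 : ℕ) (hn0 : n0 = ∑ a, capA a)
    (Ms : Finset (A × B × ℕ))
    (hstable : ColStable E capA capB rA rB n0 Ms)
    (M0 : Finset (Clones capA × Clones capB × ℕ))
    (hreal : ColRealizes M0 Ms) :
    Stable0 E (Ms.image (fun e => (e.1, e.2.1))) rA rB n0 M0 :=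
  stmt9_general capA capB rA rB hrA hrB E n0 Ms hstable M0 hreal
end

section
/- Let M be a popular perfect matching in a many-to-many instance G, M' a one-to-one realization of M in G'_{M'}, and N any perfect matching in G. Then there exists a one-to-one realization N' of N inside the graph G'_{M'} (i.e., N' uses only edges of E'_{M'}) such that Δ(M',N') = Σ_{v ∈ A∪B} vote_v(M,N), where Δ(M',N') is the one-to-one vote difference. -/
/-- The one-to-one vote difference `Δ(M',N')` in the cloned instance. -/
def Delta' {A B : Type*} [Fintype A] [Fintype B] {capA : A → ℕ} {capB : B → ℕ}
    (rA : A → B → ℕ) (rB : B → A → ℕ)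
    (M' N' : Clones capA ≃ Clones capB) : ℤ :=
  (∑ x : Clones capA,
      lsgn (rA x.1 (M' x).1) (M' x).2 (rA x.1 (N' x).1) (N' x).2) +
    ∑ y : Clones capB,
      lsgn (rB y.1 (M'.symm y).1) (M'.symm y).2 (rB y.1 (N'.symm y).1) (N'.symm y).2

/-!
For every vertex `v` fix a bijection `σ_v : M(v) \ N(v) ≃ N(v) \ M(v)` attaining
`vote_v(M,N)` and extend it by the identity on `M(v) ∩ N(v)` to `M(v) ≃ N(v)`. Through `M'`
the clones of `v` are in bijection with `M(v)`, so these extensions on both sides glue, along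
the edges of `N`, to a bijection `N'` of clones that realizes `N` and coincides with `M'` on
common edges; every other edge of `N'` is a copy of an edge of `N \ M`, hence lies in
`G'_{M'}`. A clone of `v` matched by `M'` along `u ∈ M(v) \ N(v)` is matched by `N'` to a
clone of `σ_v u ≠ u`, so it votes exactly as `v` does on the pair `(u, σ_v u)`, while clones
on common edges vote `0`. Summing over clones gives `Σ_v vote_v(M,N)`.
-/

lemma vsgn_self (r : ℕ) : vsgn r r = 0 := by simp [vsgn]

lemma lsgn_eq_vsgn {r r' j j' : ℕ} (h : r = r' → j = j') : lsgn r j r' j' = vsgn r r' := by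
  rcases lt_trichotomy r r' with hr | rfl | hr
  · simp [lsgn, vsgn, hr]
  · simp [lsgn, vsgn, h rfl]
  · simp [lsgn, vsgn, hr, hr.ne', not_lt_of_gt hr]

section Neighbours

variable {A B : Type*} [DecidableEq A] [DecidableEq B]

lemma mem_jobsOf {M : Finset (A × B)} {a : A} {b : B} : b ∈ jobsOf M a ↔ (a, b) ∈ M := by
  simp [jobsOf]

lemma mem_agentsOf {M : Finset (A × B)} {a : A} {b : B} : a ∈ agentsOf M b ↔ (a, b) ∈ M := by
  simp [agentsOf]

lemma mem_agentsOf_iff_mem_jobsOf {M : Finset (A × B)} {a : A} {b : B} :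
    a ∈ agentsOf M b ↔ b ∈ jobsOf M a :=
  mem_agentsOf.trans mem_jobsOf.symm

lemma IsPerfect.card_jobsOf {E M : Finset (A × B)} {capA : A → ℕ} {capB : B → ℕ}
    (hM : IsPerfect E M capA capB) (a : A) : (jobsOf M a).card = capA a := by
  rw [jobsOf, Finset.card_image_of_injOn, hM.2.1 a]
  rintro ⟨a₁, b₁⟩ h₁ ⟨a₂, b₂⟩ h₂ (rfl : b₁ = b₂)
  simp_all

lemma IsPerfect.card_agentsOf {E M : Finset (A × B)} {capA : A → ℕ} {capB : B → ℕ}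
    (hM : IsPerfect E M capA capB) (b : B) : (agentsOf M b).card = capB b := by
  rw [agentsOf, Finset.card_image_of_injOn, hM.2.2 b]
  rintro ⟨a₁, b₁⟩ h₁ ⟨a₂, b₂⟩ h₂ (rfl : a₁ = a₂)
  simp_all

def flipEdges (N : Finset (A × B)) :
    ((a : A) × jobsOf N a) ≃ ((b : B) × agentsOf N b) where
  toFun p := ⟨p.2, p.1, mem_agentsOf_iff_mem_jobsOf.2 p.2.2⟩
  invFun p := ⟨p.2, p.1, mem_agentsOf_iff_mem_jobsOf.1 p.2.2⟩
  left_inv _ := rfl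
  right_inv _ := rfl

end Neighbours

section ExtendSdiff

variable {β : Type*} [DecidableEq β] {S T : Finset β}

def extendSdiffEquiv (σ : ↥(S \ T) ≃ ↥(T \ S)) : ↥S ≃ ↥T where
  toFun x := if h : x.1 ∈ T then ⟨x, h⟩
    else ⟨σ ⟨x, Finset.mem_sdiff.2 ⟨x.2, h⟩⟩, (Finset.mem_sdiff.1 (σ _).2).1⟩
  invFun y := if h : y.1 ∈ S then ⟨y, h⟩
    else ⟨σ.symm ⟨y, Finset.mem_sdiff.2 ⟨y.2, h⟩⟩, (Finset.mem_sdiff.1 (σ.symm _).2).1⟩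
  left_inv x := by
    by_cases h : x.1 ∈ T
    · simp [h]
    · simp [h, (Finset.mem_sdiff.1 (σ _).2).2]
  right_inv y := by
    by_cases h : y.1 ∈ S
    · simp [h]
    · simp [h, (Finset.mem_sdiff.1 (σ.symm _).2).2]

variable (σ : ↥(S \ T) ≃ ↥(T \ S))

lemma extendSdiffEquiv_apply_of_mem (x : ↥S) (h : x.1 ∈ T) :
    (extendSdiffEquiv σ x).1 = x := by
  simp [extendSdiffEquiv, h]

lemma extendSdiffEquiv_apply_of_notMem (x : ↥S) (h : x.1 ∉ T) :
    (extendSdiffEquiv σ x).1 = σ ⟨x, Finset.mem_sdiff.2 ⟨x.2, h⟩⟩ := by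
  simp [extendSdiffEquiv, h]

lemma extendSdiffEquiv_apply_mem_iff (x : ↥S) : (extendSdiffEquiv σ x).1 ∈ S ↔ x.1 ∈ T := by
  by_cases h : x.1 ∈ T
  · simp [extendSdiffEquiv_apply_of_mem σ x h, h]
  · simp only [extendSdiffEquiv_apply_of_notMem σ x h, h, iff_false]
    exact (Finset.mem_sdiff.1 (σ _).2).2

lemma sum_extendSdiffEquiv {M : Type*} [AddCommMonoid M] (f : β → β → M)
    (hf : ∀ u, f u u = 0) :
    ∑ u : ↥S, f u (extendSdiffEquiv σ u) = ∑ u : ↥(S \ T), f u (σ u) := by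
  rw [← Fintype.sum_subtype_add_sum_subtype (fun u : ↥S => u.1 ∈ T)]
  have hcommon : ∑ u : {u : ↥S // u.1 ∈ T}, f u.1 (extendSdiffEquiv σ u.1) = 0 :=
    Fintype.sum_eq_zero _ fun u => by rw [extendSdiffEquiv_apply_of_mem σ u.1 u.2, hf]
  rw [hcommon, zero_add]
  let e : {u : ↥S // u.1 ∉ T} ≃ ↥(S \ T) :=
    { toFun u := ⟨u.1, Finset.mem_sdiff.2 ⟨u.1.2, u.2⟩⟩
      invFun u := ⟨⟨u, (Finset.mem_sdiff.1 u.2).1⟩, (Finset.mem_sdiff.1 u.2).2⟩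
      left_inv _ := rfl
      right_inv _ := rfl }
  exact Fintype.sum_equiv e _ _ fun u => by rw [extendSdiffEquiv_apply_of_notMem σ u.1 u.2]; rfl

end ExtendSdiff

section Realizes

variable {A B : Type*} {capA : A → ℕ} {capB : B → ℕ} {M : Finset (A × B)}
  {P : Clones capA ≃ Clones capB}

lemma Realizes.eq_of_fst_eq (h : Realizes P M) {x x' : Clones capA} (h₁ : x.1 = x'.1)
    (h₂ : (P x).1 = (P x').1) : x = x' := by
  by_contra hne
  exact h.2 x x' hne h₁ h₂

lemma Realizes.eq_of_fst_symm_eq (h : Realizes P M) {y y' : Clones capB} (h₁ : y.1 = y'.1)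
    (h₂ : (P.symm y).1 = (P.symm y').1) : y = y' :=
  P.symm.injective (h.eq_of_fst_eq h₂ (by simpa using h₁))

variable [DecidableEq A] [DecidableEq B]

noncomputable def Realizes.jobsEquiv (h : Realizes P M)
    (hM : ∀ a, (jobsOf M a).card = capA a) (a : A) : Fin (capA a) ≃ jobsOf M a :=
  Equiv.ofBijective (fun i => ⟨(P ⟨a, i⟩).1, mem_jobsOf.2 (h.1 ⟨a, i⟩)⟩) <|
    (Fintype.bijective_iff_injective_and_card _).2
      ⟨fun i j hij => by
        simpa using h.eq_of_fst_eq (x := ⟨a, i⟩) (x' := ⟨a, j⟩) rfl (congrArg Subtype.val hij),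
        by simp [hM]⟩

noncomputable def Realizes.agentsEquiv (h : Realizes P M)
    (hM : ∀ b, (agentsOf M b).card = capB b) (b : B) : Fin (capB b) ≃ agentsOf M b :=
  Equiv.ofBijective
    (fun j => ⟨(P.symm ⟨b, j⟩).1, mem_agentsOf.2 (by simpa using h.1 (P.symm ⟨b, j⟩))⟩) <|
    (Fintype.bijective_iff_injective_and_card _).2
      ⟨fun i j hij => by
        simpa using
          h.eq_of_fst_symm_eq (y := ⟨b, i⟩) (y' := ⟨b, j⟩) rfl (congrArg Subtype.val hij),
        by simp [hM]⟩

@[simp]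
lemma Realizes.coe_jobsEquiv (h : Realizes P M) (hM : ∀ a, (jobsOf M a).card = capA a)
    (x : Clones capA) : (h.jobsEquiv hM x.1 x.2 : B) = (P x).1 := rfl

@[simp]
lemma Realizes.coe_agentsEquiv (h : Realizes P M) (hM : ∀ b, (agentsOf M b).card = capB b)
    (y : Clones capB) : (h.agentsEquiv hM y.1 y.2 : A) = (P.symm y).1 := rfl

end Realizes

section Realization

variable {A B : Type*} [DecidableEq A] [DecidableEq B] {capA : A → ℕ} {capB : B → ℕ}
  {M N : Finset (A × B)} {M' : Clones capA ≃ Clones capB}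
  (hreal : Realizes M' M) (hMa : ∀ a, (jobsOf M a).card = capA a)
  (hMb : ∀ b, (agentsOf M b).card = capB b)
  (σA : ∀ a, ↥(jobsOf M a \ jobsOf N a) ≃ ↥(jobsOf N a \ jobsOf M a))
  (σB : ∀ b, ↥(agentsOf M b \ agentsOf N b) ≃ ↥(agentsOf N b \ agentsOf M b))

/-- The realization of `N` that keeps the `M'`-clone assignment on common edges and
routes each edge of `N \ M` through the clones that `σA` and `σB` pair it with. -/
noncomputable def realizeAlong : Clones capA ≃ Clones capB :=
  (Equiv.sigmaCongrRight (hreal.jobsEquiv hMa)).trans <|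
    (Equiv.sigmaCongrRight fun a => extendSdiffEquiv (σA a)).trans <|
      (flipEdges N).trans <|
        (Equiv.sigmaCongrRight fun b => extendSdiffEquiv (σB b)).symm.trans
          (Equiv.sigmaCongrRight (hreal.agentsEquiv hMb)).symm

lemma realizeAlong_fst (x : Clones capA) :
    (realizeAlong hreal hMa hMb σA σB x).1
      = extendSdiffEquiv (σA x.1) (hreal.jobsEquiv hMa x.1 x.2) := rfl

lemma realizeAlong_symm_fst (y : Clones capB) :
    ((realizeAlong hreal hMa hMb σA σB).symm y).1
      = extendSdiffEquiv (σB y.1) (hreal.agentsEquiv hMb y.1 y.2) := rfl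

lemma realizes_realizeAlong : Realizes (realizeAlong hreal hMa hMb σA σB) N := by
  refine ⟨fun x => mem_jobsOf.1 (extendSdiffEquiv (σA x.1) _).2, ?_⟩
  rintro ⟨a, i⟩ ⟨a', j⟩ hne (rfl : a = a') heq
  refine hne (congrArg _ ((hreal.jobsEquiv hMa a).injective ?_))
  exact (extendSdiffEquiv (σA a)).injective (Subtype.ext heq)

lemma realizeAlong_apply_of_mem (x : Clones capA) (h : (M' x).1 ∈ jobsOf N x.1) :
    realizeAlong hreal hMa hMb σA σB x = M' x := by
  set N' := realizeAlong hreal hMa hMb σA σB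
  have hx : ((N'.symm (M' x)).1 : A) = x.1 := by
    rw [realizeAlong_symm_fst, extendSdiffEquiv_apply_of_mem] <;>
      simp [mem_agentsOf_iff_mem_jobsOf, h]
  have hy : (N' x).1 = (M' x).1 := by
    rw [realizeAlong_fst, extendSdiffEquiv_apply_of_mem] <;> simp [h]
  have hsymm := (realizes_realizeAlong hreal hMa hMb σA σB).eq_of_fst_eq hx
    (by rw [Equiv.apply_symm_apply, hy])
  exact ((Equiv.symm_apply_eq _).1 hsymm).symm

lemma realizeAlong_symm_apply_of_mem (y : Clones capB) (h : (M'.symm y).1 ∈ agentsOf N y.1) :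
    (realizeAlong hreal hMa hMb σA σB).symm y = M'.symm y := by
  rw [Equiv.symm_apply_eq, realizeAlong_apply_of_mem, Equiv.apply_symm_apply]
  simpa [mem_agentsOf_iff_mem_jobsOf] using h

lemma inEM_realizeAlong {E : Finset (A × B)} (hNE : N ⊆ E) (x : Clones capA) :
    inEM E M M' x (realizeAlong hreal hMa hMb σA σB x) := by
  by_cases h : (M' x).1 ∈ jobsOf N x.1
  · exact Or.inl (realizeAlong_apply_of_mem hreal hMa hMb σA σB x h).symm
  · refine Or.inr ⟨hNE ((realizes_realizeAlong hreal hMa hMb σA σB).1 x), fun hM => h ?_⟩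
    rwa [← mem_jobsOf, realizeAlong_fst, extendSdiffEquiv_apply_mem_iff,
      Realizes.coe_jobsEquiv] at hM

end Realization

/-- The clone indices `i`, `j` only matter when the two ranks tie, which by injectivity of
`r a` happens only on `S a ∩ T a`, where the extension is the identity. -/
lemma sum_lsgn_extendSdiffEquiv {α β : Type*} [Fintype α] [DecidableEq β] {cap : α → ℕ}
    (r : α → β → ℕ) (hr : ∀ a, Function.Injective (r a)) {S T : α → Finset β}
    (e : ∀ a, Fin (cap a) ≃ S a) (σ : ∀ a, ↥(S a \ T a) ≃ ↥(T a \ S a))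
    (i j : Clones cap → ℕ) (hij : ∀ x, (e x.1 x.2 : β) ∈ T x.1 → i x = j x) :
    ∑ x : Clones cap,
        lsgn (r x.1 (e x.1 x.2)) (i x) (r x.1 (extendSdiffEquiv (σ x.1) (e x.1 x.2))) (j x)
      = ∑ a, ∑ u : ↥(S a \ T a), vsgn (r a u) (r a (σ a u)) := by
  have hterm : ∀ x : Clones cap,
      lsgn (r x.1 (e x.1 x.2)) (i x) (r x.1 (extendSdiffEquiv (σ x.1) (e x.1 x.2))) (j x)
        = vsgn (r x.1 (e x.1 x.2)) (r x.1 (extendSdiffEquiv (σ x.1) (e x.1 x.2))) := by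
    refine fun x => lsgn_eq_vsgn fun hrank => hij x ?_
    rw [← extendSdiffEquiv_apply_mem_iff (σ x.1), ← hr x.1 hrank]
    exact (e x.1 x.2).2
  rw [Fintype.sum_congr _ _ hterm, Fintype.sum_sigma]
  refine Fintype.sum_congr _ _ fun a => ?_
  rw [(e a).sum_comp fun u => vsgn (r a u) (r a (extendSdiffEquiv (σ a) u))]
  exact sum_extendSdiffEquiv (σ a) (fun u v => vsgn (r a u) (r a v)) fun u => vsgn_self _

/-- let `M` be a popular perfect matching in a many-to-many instance
`G`, `M'` a one-to-one realization of `M`, and `N` any perfect matching of `G`.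
Then there is a one-to-one realization `N'` of `N` using only edges of `G'_{M'}`
such that `Δ(M',N') = Σ_{v ∈ A∪B} vote_v(M,N)` (the right-hand side being the sum of
the minimum vote values `za`, `zb`). -/
theorem stmt16 {A B : Type*} [Fintype A] [Fintype B] [DecidableEq A] [DecidableEq B]
    (capA : A → ℕ) (capB : B → ℕ)
    (rA : A → B → ℕ) (rB : B → A → ℕ)
    (hrA : ∀ a, Function.Injective (rA a)) (hrB : ∀ b, Function.Injective (rB b))
    (E M N : Finset (A × B))
    (hpop : PopularPerfect E capA capB rA rB M)
    (hN : IsPerfect E N capA capB)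
    (M' : Clones capA ≃ Clones capB) (hreal : Realizes M' M)
    (za : A → ℤ) (zb : B → ℤ)
    (hza : ∀ a, IsLeast
      (voteSet (rA a) (jobsOf M a \ jobsOf N a) (jobsOf N a \ jobsOf M a)) (za a))
    (hzb : ∀ b, IsLeast
      (voteSet (rB b) (agentsOf M b \ agentsOf N b) (agentsOf N b \ agentsOf M b)) (zb b)) :
    ∃ N' : Clones capA ≃ Clones capB, Realizes N' N ∧
      (∀ x, inEM E M M' x (N' x)) ∧
      Delta' rA rB M' N' = (∑ a, za a) + ∑ b, zb b := by
  have hM := hpop.1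
  choose σA hσA using fun a => (hza a).1
  choose σB hσB using fun b => (hzb b).1
  let N' := realizeAlong hreal hM.card_jobsOf hM.card_agentsOf σA σB
  refine ⟨N', realizes_realizeAlong .., inEM_realizeAlong _ _ _ _ _ hN.1, ?_⟩
  simp only [hσA, hσB]
  refine congrArg₂ (· + ·) ?_ ?_
  · exact sum_lsgn_extendSdiffEquiv rA hrA (hreal.jobsEquiv hM.card_jobsOf) σA _ _
      fun x hx => by rw [realizeAlong_apply_of_mem _ _ _ _ _ x hx]
  · exact sum_lsgn_extendSdiffEquiv rB hrB (hreal.agentsEquiv hM.card_agentsOf) σB _ _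
      fun y hy => by rw [realizeAlong_symm_apply_of_mem _ _ _ _ _ y hy]
end

section
/- In a one-to-one bipartite instance with strict preferences, every stable matching is popular: if S is stable, then Δ(S, N) ≥ 0 for every matching N. -/
/-!
Pair every vertex matched in `N` with its `N`-partner. A vertex left single by `N` never
prefers `N`. For an edge `(a, b)` of `N` outside `S`, strictness of preferences makes both
votes nonzero, and if both `a` and `b` preferred `N` then `(a, b)` would block `S`. So each
pair contributes a nonnegative amount to `Δ(S, N)`.
-/

/-- Vote of a vertex comparing two (possibly absent) partners, given its rank
function (lower rank = preferred); being unmatched is worse than any partner. -/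
def voteOpt {B : Type*} (r : B → ℕ) : Option B → Option B → ℤ
  | some u, some u' => if r u < r u' then 1 else if r u' < r u then -1 else 0
  | some _, none => 1
  | none, some _ => -1
  | none, none => 0

section Vote

variable {B : Type*} (r : B → ℕ)

theorem neg_one_le_voteOpt (x y : Option B) : -1 ≤ voteOpt r x y := by
  rcases x with _ | u <;> rcases y with _ | u' <;> simp only [voteOpt] <;> try split_ifs
  all_goals omega

theorem voteOpt_none_nonneg (x : Option B) : 0 ≤ voteOpt r x none := by
  cases x <;> simp [voteOpt]

theorem voteOpt_eq_zero_iff (hr : Function.Injective r) {x y : Option B} :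
    voteOpt r x y = 0 ↔ x = y := by
  rcases x with _ | u <;> rcases y with _ | u' <;> simp only [voteOpt] <;> try simp
  constructor
  · intro h
    split_ifs at h <;> first | omega | exact hr (by omega)
  · rintro rfl
    simp

theorem voteOpt_some_neg_iff (x : Option B) (u : B) :
    voteOpt r x (some u) < 0 ↔ x = none ∨ ∃ u', x = some u' ∧ r u < r u' := by
  rcases x with _ | u' <;> simp only [voteOpt] <;> simp
  split_ifs <;> omega

end Vote

section Matching

variable {A B : Type*} [Fintype A] [Fintype B]

theorem sum_elim_partner_eq_sum_elim_partner {M : Type*} [AddCommMonoid M]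
    {pa : A → Option B} {pb : B → Option A} (hcons : ∀ a b, pa a = some b ↔ pb b = some a)
    (g : B → M) :
    ∑ a, (pa a).elim 0 g = ∑ b, (pb b).elim 0 (fun _ => g b) := by
  classical
  have hA : ∀ a, (pa a).elim 0 g = ∑ b, if pa a = some b then g b else 0 := by
    intro a; cases pa a <;> simp
  have hB : ∀ b, (pb b).elim 0 (fun _ => g b) = ∑ a, if pb b = some a then g b else 0 := by
    intro b; cases pb b <;> simp
  simp_rw [hA, hB, hcons]
  exact Finset.sum_comm

theorem sum_add_sum_nonneg_of_matching {M : Type*} [AddCommGroup M] [PartialOrder M]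
    [IsOrderedAddMonoid M] {pa : A → Option B} {pb : B → Option A}
    (hcons : ∀ a b, pa a = some b ↔ pb b = some a) {f : A → M} {g : B → M}
    (hf : ∀ a, pa a = none → 0 ≤ f a) (hg : ∀ b, pb b = none → 0 ≤ g b)
    (hfg : ∀ a b, pa a = some b → 0 ≤ f a + g b) :
    0 ≤ ∑ a, f a + ∑ b, g b :=
  calc 0 ≤ ∑ a, (f a + (pa a).elim 0 g) := by
        refine Finset.sum_nonneg fun a _ => ?_
        cases h : pa a with
        | none => simpa using hf a h
        | some b => simpa using hfg a b h
    _ = ∑ a, f a + ∑ b, (pb b).elim 0 (fun _ => g b) := by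
        rw [Finset.sum_add_distrib, sum_elim_partner_eq_sum_elim_partner hcons]
    _ ≤ ∑ a, f a + ∑ b, g b := by
        gcongr with b
        cases h : pb b with
        | none => simpa using hg b h
        | some _ => simp

end Matching

theorem stmt17_general {A B : Type*} [Fintype A] [Fintype B]
    (E : A → B → Prop)
    (rA : A → B → ℕ) (rB : B → A → ℕ)
    (hrA : ∀ a, Function.Injective (rA a)) (hrB : ∀ b, Function.Injective (rB b))
    (pSa : A → Option B) (pSb : B → Option A)
    (hScons : ∀ a b, pSa a = some b ↔ pSb b = some a)
    (hstable : ¬ ∃ a b, E a b ∧ pSa a ≠ some b ∧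
        (pSa a = none ∨ ∃ b', pSa a = some b' ∧ rA a b < rA a b') ∧
        (pSb b = none ∨ ∃ a', pSb b = some a' ∧ rB b a < rB b a'))
    (pNa : A → Option B) (pNb : B → Option A)
    (hNcons : ∀ a b, pNa a = some b ↔ pNb b = some a)
    (hNE : ∀ a b, pNa a = some b → E a b) :
    0 ≤ (∑ a, voteOpt (rA a) (pSa a) (pNa a)) +
      ∑ b, voteOpt (rB b) (pSb b) (pNb b) := by
  refine sum_add_sum_nonneg_of_matching hNcons
    (fun a h => h ▸ voteOpt_none_nonneg _ _) (fun b h => h ▸ voteOpt_none_nonneg _ _) ?_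
  intro a b hab
  rw [hab, (hNcons a b).1 hab]
  by_cases hS : pSa a = some b
  · rw [hS, (hScons a b).1 hS, (voteOpt_eq_zero_iff _ (hrA a)).2 rfl,
      (voteOpt_eq_zero_iff _ (hrB b)).2 rfl, add_zero]
  have hS' : pSb b ≠ some a := fun h => hS ((hScons a b).2 h)
  have hA_ne := mt (voteOpt_eq_zero_iff _ (hrA a)).1 hS
  have hB_ne := mt (voteOpt_eq_zero_iff _ (hrB b)).1 hS'
  have not_both_neg : ¬ (voteOpt (rA a) (pSa a) (some b) < 0 ∧
      voteOpt (rB b) (pSb b) (some a) < 0) := fun ⟨hA, hB⟩ =>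
    hstable ⟨a, b, hNE a b hab, hS, (voteOpt_some_neg_iff _ _ _).1 hA,
      (voteOpt_some_neg_iff _ _ _).1 hB⟩
  have hA_ge := neg_one_le_voteOpt (rA a) (pSa a) (some b)
  have hB_ge := neg_one_le_voteOpt (rB b) (pSb b) (some a)
  omega

/-- Gärdenfors: in a one-to-one bipartite instance with strict
preferences, every stable matching `S` (given by partner functions `pSa`, `pSb`) is
popular: `Δ(S,N) ≥ 0` for every matching `N`. -/
theorem stmt17 {A B : Type*} [Fintype A] [Fintype B]
    (E : A → B → Prop)
    (rA : A → B → ℕ) (rB : B → A → ℕ)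
    (hrA : ∀ a, Function.Injective (rA a)) (hrB : ∀ b, Function.Injective (rB b))
    (pSa : A → Option B) (pSb : B → Option A)
    (hScons : ∀ a b, pSa a = some b ↔ pSb b = some a)
    (hSE : ∀ a b, pSa a = some b → E a b)
    (hstable : ¬ ∃ a b, E a b ∧ pSa a ≠ some b ∧
        (pSa a = none ∨ ∃ b', pSa a = some b' ∧ rA a b < rA a b') ∧
        (pSb b = none ∨ ∃ a', pSb b = some a' ∧ rB b a < rB b a'))
    (pNa : A → Option B) (pNb : B → Option A)
    (hNcons : ∀ a b, pNa a = some b ↔ pNb b = some a)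
    (hNE : ∀ a b, pNa a = some b → E a b) :
    0 ≤ (∑ a, voteOpt (rA a) (pSa a) (pNa a)) +
      ∑ b, voteOpt (rB b) (pSb b) (pNb b) :=
  stmt17_general E rA rB hrA hrB pSa pSb hScons hstable pNa pNb hNcons hNE
end
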